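/- arXiv:2301.09503 — 6 statements merged into one kernel-verified Lean document; each statement's English description precedes it below -/
import Mathlib

section
/- For the linear model fixed point (x_c, y_c) = ((2−2q)/(4−3q), (1−q)/(4−3q)) with q ∈ [0,1), the point lies in the quadrangle Q of convex mosaics (i.e., satisfies y ≥ x/2, y ≥ 1/2 − x, y ≤ 1/3, y ≤ 1/2 − x/2) if and only if q ≤ 2/3. -/
/-!
Since `x_c = 2 y_c`, the fixed point lies on the side `y = x / 2` of `Q`, which `Q` meets in the
segment `1/6 ≤ y ≤ 1/4`. For `4 - 3q > 0` the bound `1/6 ≤ y_c` is `q ≤ 2/3` and the bound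
`y_c ≤ 1/4` is `0 ≤ q`.
-/

/-- The region `Q` of convex mosaics. -/
def Qregion (p : ℝ × ℝ) : Prop :=
  p.1 / 2 ≤ p.2 ∧ 1 / 2 - p.1 ≤ p.2 ∧ p.2 ≤ 1 / 3 ∧ p.2 ≤ 1 / 2 - p.1 / 2

theorem qregion_two_mul_iff (y : ℝ) : Qregion (2 * y, y) ↔ 1 / 6 ≤ y ∧ y ≤ 1 / 4 := by
  unfold Qregion
  constructor
  · rintro ⟨-, h₁, -, h₂⟩
    constructor <;> linarith
  · rintro ⟨h₁, h₂⟩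
    refine ⟨?_, ?_, ?_, ?_⟩ <;> linarith

namespace LinearFixedPoint

variable {q : ℝ} (hq : q < 4 / 3)
include hq

theorem one_sixth_le_y_iff : 1 / 6 ≤ (1 - q) / (4 - 3 * q) ↔ q ≤ 2 / 3 := by
  rw [div_le_div_iff₀ (by norm_num) (by linarith)]
  constructor <;> intro h <;> linarith

theorem y_le_one_quarter_iff : (1 - q) / (4 - 3 * q) ≤ 1 / 4 ↔ 0 ≤ q := by
  rw [div_le_div_iff₀ (by linarith) (by norm_num)]
  constructor <;> intro h <;> linarith

end LinearFixedPoint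

/-- The linear model fixed point lies in `Q` iff `q ≤ 2/3`. -/
theorem linear_fixed_point_in_Q_iff (q : ℝ) (hq0 : 0 ≤ q) (hq1 : q < 1) :
    Qregion ((2 - 2 * q) / (4 - 3 * q), (1 - q) / (4 - 3 * q)) ↔ q ≤ 2 / 3 := by
  have hq : q < 4 / 3 := by linarith
  have hx : (2 - 2 * q) / (4 - 3 * q) = 2 * ((1 - q) / (4 - 3 * q)) := by ring
  rw [hx, qregion_two_mul_iff, LinearFixedPoint.one_sixth_le_y_iff hq,
    LinearFixedPoint.y_le_one_quarter_iff hq]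
  exact and_iff_left hq0
end

section
/- The unique fixed point in the region Q of the planar system dx/dt = λ₁(2μy − 4μxy − 2x² − 2xy + x), dy/dt = λ₁(μy − 4μy² − 2xy − 2y² + y), for parameters λ₁ > 0, μ > 0, is (x_c, y_c) = ((μ+1)/(2μ+3), (μ+1)/(4μ+6)). -/
/-- The unique fixed point in `Q` of the nonlinear system is
`((μ+1)/(2μ+3), (μ+1)/(4μ+6))`. -/
theorem nonlinear_fixed_point_unique (lam mu : ℝ) (hlam : 0 < lam) (hmu : 0 < mu) :
    ∀ p : ℝ × ℝ, Qregion p →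
      ((lam * (2 * mu * p.2 - 4 * mu * p.1 * p.2 - 2 * p.1 ^ 2 - 2 * p.1 * p.2 + p.1) = 0 ∧
        lam * (mu * p.2 - 4 * mu * p.2 ^ 2 - 2 * p.1 * p.2 - 2 * p.2 ^ 2 + p.2) = 0)
       ↔ p = ((mu + 1) / (2 * mu + 3), (mu + 1) / (4 * mu + 6))) := by
  intro p hp
  obtain ⟨x, y⟩ := p
  obtain ⟨h1, h2, h3, h4⟩ := hp
  simp only at h1 h2 h3 h4 ⊢
  have hy : (1:ℝ)/6 ≤ y := by linarith
  have hd1 : (2 * mu + 3 : ℝ) ≠ 0 := by positivity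
  have hd2 : (4 * mu + 6 : ℝ) ≠ 0 := by positivity
  constructor
  · rintro ⟨e1, e2⟩
    have hl : lam ≠ 0 := hlam.ne'
    have e1' : 2 * mu * y - 4 * mu * x * y - 2 * x ^ 2 - 2 * x * y + x = 0 :=
      (mul_eq_zero.1 e1).resolve_left hl
    have e2' : mu * y - 4 * mu * y ^ 2 - 2 * x * y - 2 * y ^ 2 + y = 0 :=
      (mul_eq_zero.1 e2).resolve_left hl
    have key : mu * (y * (2 * y - x)) = 0 := by linear_combination y * e1' - x * e2'
    have hx2y : x = 2 * y := by
      rcases mul_eq_zero.1 key with h | h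
      · exact absurd h hmu.ne'
      rcases mul_eq_zero.1 h with h' | h'
      · linarith
      · linarith
    have hyv : y = (mu + 1) / (4 * mu + 6) := by
      have hy0 : y ≠ 0 := by linarith
      have : y * (mu - 4 * mu * y - 2 * x - 2 * y + 1) = 0 := by linear_combination e2'
      have h5 : mu - 4 * mu * y - 2 * x - 2 * y + 1 = 0 :=
        (mul_eq_zero.1 this).resolve_left hy0
      field_simp
      linarith [hx2y]
    refine Prod.ext ?_ ?_ <;> simp
    · rw [hx2y, hyv]; field_simp; ring
    · exact hyv
  · intro h
    rw [Prod.mk.injEq] at h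
    obtain ⟨hx, hy'⟩ := h
    subst hx; subst hy'
    constructor
    · field_simp; ring
    · field_simp; ring
end

section
/- The Jacobian of the nonlinear system f(x,y) = λ₁(2μy − 4μxy − 2x² − 2xy + x), g(x,y) = λ₁(μy − 4μy² − 2xy − 2y² + y), evaluated at the fixed point (x_c, y_c) = ((μ+1)/(2μ+3), (μ+1)/(4μ+6)), has eigenvalues α₁ = −λ₁μ and α₂ = −λ₁(μ+1), both negative for λ₁, μ > 0. -/
/-!
`f` and `g` are quadratic in each variable, so the Jacobian is an explicit matrix with entries affine
in `(x, y)`. At the fixed point, using `x_c (2μ+3) = μ+1` and `y_c = x_c / 2`, its trace is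
`-λ₁μ - λ₁(μ+1)` and its determinant `λ₁μ · λ₁(μ+1)`; for a `2 × 2` matrix
`det (J - a) = a² - (tr J) a + det J`, so both values are roots of the characteristic polynomial.
-/

namespace Matrix

variable {R : Type*} [CommRing R]

theorem det_fin_two_sub_smul_one (A : Matrix (Fin 2) (Fin 2) R) (a : R) :
    (A - a • 1).det = a ^ 2 - A.trace * a + A.det := by
  simp only [det_fin_two, trace_fin_two, sub_apply, smul_apply, one_apply_eq,
    one_apply_ne zero_ne_one, one_apply_ne one_ne_zero, smul_eq_mul, mul_zero, mul_one, sub_zero]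
  ring

theorem det_fin_two_sub_smul_one_eq_zero_of_trace_of_det {A : Matrix (Fin 2) (Fin 2) R}
    {a b : R} (htr : A.trace = a + b) (hdet : A.det = a * b) :
    (A - a • 1).det = 0 ∧ (A - b • 1).det = 0 := by
  rw [det_fin_two_sub_smul_one, det_fin_two_sub_smul_one, htr, hdet]
  constructor <;> ring

end Matrix

theorem deriv_eq_of_forall_eq_quadratic {𝕜 : Type*} [NontriviallyNormedField 𝕜] {φ : 𝕜 → 𝕜}
    (a b c : 𝕜) (hφ : ∀ t, φ t = a * t ^ 2 + b * t + c) (x : 𝕜) :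
    deriv φ x = 2 * a * x + b := by
  have hquad : HasDerivAt (fun t => a * t ^ 2 + b * t + c) (a * (2 * x) + b * 1) x := by
    simpa using
      (((hasDerivAt_pow 2 x).const_mul a).add ((hasDerivAt_id' x).const_mul b)).add_const c
  rw [funext hφ, hquad.deriv]
  ring

def linearization (lam mu x y : ℝ) : Matrix (Fin 2) (Fin 2) ℝ :=
  !![lam * (1 - 4 * mu * y - 4 * x - 2 * y), lam * (2 * mu - 4 * mu * x - 2 * x);
     -2 * lam * y, lam * (mu + 1 - 8 * mu * y - 2 * x - 4 * y)]

section

variable {lam mu : ℝ} {f g : ℝ → ℝ → ℝ}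

theorem jacobian_eq_linearization
    (hf : ∀ x y, f x y = lam * (2 * mu * y - 4 * mu * x * y - 2 * x ^ 2 - 2 * x * y + x))
    (hg : ∀ x y, g x y = lam * (mu * y - 4 * mu * y ^ 2 - 2 * x * y - 2 * y ^ 2 + y))
    (x y : ℝ) :
    !![deriv (fun x => f x y) x, deriv (fun y => f x y) y;
       deriv (fun x => g x y) x, deriv (fun y => g x y) y] =
      linearization lam mu x y := by
  rw [deriv_eq_of_forall_eq_quadratic (-2 * lam) (lam * (1 - 4 * mu * y - 2 * y))
      (2 * lam * mu * y) (fun t => by rw [hf]; ring),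
    deriv_eq_of_forall_eq_quadratic 0 (lam * (2 * mu - 4 * mu * x - 2 * x))
      (lam * (x - 2 * x ^ 2)) (fun t => by rw [hf]; ring),
    deriv_eq_of_forall_eq_quadratic 0 (-2 * lam * y)
      (lam * (mu * y - 4 * mu * y ^ 2 - 2 * y ^ 2 + y)) (fun t => by rw [hg]; ring),
    deriv_eq_of_forall_eq_quadratic (-lam * (4 * mu + 2)) (lam * (mu + 1 - 2 * x)) 0
      (fun t => by rw [hg]; ring)]
  rw [linearization]
  ring_nf

end

section

variable {lam mu xc yc : ℝ} (hxc : xc * (2 * mu + 3) = mu + 1) (hyc : yc = xc / 2)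
include hxc hyc

theorem trace_linearization_fixedPoint :
    (linearization lam mu xc yc).trace = -(lam * mu) + -(lam * (mu + 1)) := by
  rw [linearization, Matrix.trace_fin_two_of, hyc]
  linear_combination (-3 * lam) * hxc

theorem det_linearization_fixedPoint :
    (linearization lam mu xc yc).det = -(lam * mu) * -(lam * (mu + 1)) := by
  rw [linearization, Matrix.det_fin_two_of, hyc]
  -- `det - λ₁²μ(μ+1) = λ₁² e (2e + 3μ + 1)` with `e = xc (2μ+3) - (μ+1)`
  linear_combination lam ^ 2 * (2 * (xc * (2 * mu + 3) - (mu + 1)) + 3 * mu + 1) * hxc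

end

/-- The Jacobian of the nonlinear system at the fixed point
`((μ+1)/(2μ+3), (μ+1)/(4μ+6))` has eigenvalues `−λ₁μ` and `−λ₁(μ+1)`, both negative. -/
theorem jacobian_eigenvalues (lam mu : ℝ) (hlam : 0 < lam) (hmu : 0 < mu)
    (f g : ℝ → ℝ → ℝ)
    (hf : ∀ x y, f x y = lam * (2 * mu * y - 4 * mu * x * y - 2 * x ^ 2 - 2 * x * y + x))
    (hg : ∀ x y, g x y = lam * (mu * y - 4 * mu * y ^ 2 - 2 * x * y - 2 * y ^ 2 + y))
    (xc yc : ℝ) (hxc : xc = (mu + 1) / (2 * mu + 3)) (hyc : yc = (mu + 1) / (4 * mu + 6))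
    (J : Matrix (Fin 2) (Fin 2) ℝ)
    (hJ : J = !![deriv (fun x => f x yc) xc, deriv (fun y => f xc y) yc;
                 deriv (fun x => g x yc) xc, deriv (fun y => g xc y) yc]) :
    (J - (-(lam * mu)) • (1 : Matrix (Fin 2) (Fin 2) ℝ)).det = 0 ∧
    (J - (-(lam * (mu + 1))) • (1 : Matrix (Fin 2) (Fin 2) ℝ)).det = 0 ∧
    -(lam * mu) < 0 ∧ -(lam * (mu + 1)) < 0 := by
  have hxc' : xc * (2 * mu + 3) = mu + 1 := by
    rw [hxc, div_mul_cancel₀ _ (by positivity)]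
  have hyc' : yc = xc / 2 := by
    rw [hyc, hxc, div_div]
    ring_nf
  obtain ⟨hα₁, hα₂⟩ := Matrix.det_fin_two_sub_smul_one_eq_zero_of_trace_of_det
    (trace_linearization_fixedPoint (lam := lam) hxc' hyc')
    (det_linearization_fixedPoint hxc' hyc')
  rw [hJ, jacobian_eq_linearization hf hg]
  exact ⟨hα₁, hα₂, neg_neg_of_pos (by positivity), neg_neg_of_pos (by positivity)⟩
end

section
/- On the boundary segment of Q lying on the line y = 1/2 − x with 1/6 ≤ x ≤ 1/3, the inward normal derivative of the nonlinear flow satisfies s₂ = f(x, 1/2 − x) + g(x, 1/2 − x) = λ₁·μ·(1/2 − x) > 0 for x < 1/2; hence the flow points into Q along this edge. -/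
/-- On the edge `y = 1/2 − x` of `Q` (for `1/6 ≤ x ≤ 1/3`), the inward normal component
`s₂ = f + g` equals `λ₁μ(1/2 − x)` and is positive for `x < 1/2`. -/
theorem inward_flow_edge2 (lam mu : ℝ) (hlam : 0 < lam) (hmu : 0 < mu)
    (f g : ℝ → ℝ → ℝ)
    (hf : ∀ x y, f x y = lam * (2 * mu * y - 4 * mu * x * y - 2 * x ^ 2 - 2 * x * y + x))
    (hg : ∀ x y, g x y = lam * (mu * y - 4 * mu * y ^ 2 - 2 * x * y - 2 * y ^ 2 + y)) :
    (∀ x : ℝ, f x (1 / 2 - x) + g x (1 / 2 - x) = lam * mu * (1 / 2 - x)) ∧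
    (∀ x : ℝ, x < 1 / 2 → 0 < f x (1 / 2 - x) + g x (1 / 2 - x)) := by
  have key : ∀ x : ℝ, f x (1 / 2 - x) + g x (1 / 2 - x) = lam * mu * (1 / 2 - x) := by
    intro x; rw [hf, hg]; ring
  refine ⟨key, fun x hx => ?_⟩
  rw [key]
  have : 0 < 1 / 2 - x := by linarith
  positivity
end

section
/- The function V(x,y) = 2y − x is a Lyapunov function for the nonlinear system on Q relative to the line y = x/2: V ≥ 0 on Q with V = 0 exactly on L₁ ∩ Q, and its derivative along the flow satisfies 2g(x,y) − f(x,y) = λ₁(x − 2y)(4μy + 2x + 2y − 1) < 0 for all (x,y) ∈ Q with y > x/2. -/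
/-- `V(x,y) = 2y − x` is a Lyapunov function on `Q` relative to `y = x/2`:
`V ≥ 0` on `Q`, vanishing exactly on the line, and
`2g − f = λ₁(x − 2y)(4μy + 2x + 2y − 1) < 0` for `(x,y) ∈ Q` with `y > x/2`. -/
theorem lyapunov_function (lam mu : ℝ) (hlam : 0 < lam) (hmu : 0 < mu)
    (f g : ℝ → ℝ → ℝ)
    (hf : ∀ x y, f x y = lam * (2 * mu * y - 4 * mu * x * y - 2 * x ^ 2 - 2 * x * y + x))
    (hg : ∀ x y, g x y = lam * (mu * y - 4 * mu * y ^ 2 - 2 * x * y - 2 * y ^ 2 + y)) :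
    (∀ p : ℝ × ℝ, Qregion p → 0 ≤ 2 * p.2 - p.1) ∧
    (∀ p : ℝ × ℝ, Qregion p → (2 * p.2 - p.1 = 0 ↔ p.2 = p.1 / 2)) ∧
    (∀ p : ℝ × ℝ, Qregion p →
      2 * g p.1 p.2 - f p.1 p.2
        = lam * (p.1 - 2 * p.2) * (4 * mu * p.2 + 2 * p.1 + 2 * p.2 - 1)) ∧
    (∀ p : ℝ × ℝ, Qregion p → p.1 / 2 < p.2 → 2 * g p.1 p.2 - f p.1 p.2 < 0) := by
  refine ⟨fun p hp => by linarith [hp.1], fun p hp => ⟨fun h => by linarith, fun h => by linarith⟩,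
    fun p hp => by rw [hf, hg]; ring, fun p hp hlt => ?_⟩
  obtain ⟨h1, h2, h3, h4⟩ := hp
  rw [hf, hg]
  have hy : (0:ℝ) < p.2 := by linarith
  have hpos : 0 < 4 * mu * p.2 + 2 * p.1 + 2 * p.2 - 1 := by nlinarith
  have : 2 * (lam * (mu * p.2 - 4 * mu * p.2 ^ 2 - 2 * p.1 * p.2 - 2 * p.2 ^ 2 + p.2)) -
      lam * (2 * mu * p.2 - 4 * mu * p.1 * p.2 - 2 * p.1 ^ 2 - 2 * p.1 * p.2 + p.1)
      = lam * (p.1 - 2 * p.2) * (4 * mu * p.2 + 2 * p.1 + 2 * p.2 - 1) := by ring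
  rw [this]
  have : p.1 - 2 * p.2 < 0 := by linarith
  exact mul_neg_of_neg_of_pos (mul_neg_of_pos_of_neg hlam this) hpos
end

section
/- Restricted to the invariant line y = x/2, the nonlinear system reduces to the one-dimensional ODE dx/dt = λ₁·x·(μ + 1 − (2μ + 3)x), whose unique positive equilibrium x_c = (μ+1)/(2μ+3) attracts every solution with initial condition x(0) ∈ [1/3, 1/2] (the x-range of L₁ ∩ Q). -/
/-!
Along `y = x/2` the vector field collapses to the logistic equation `x' = a x (b - c x)`, which is
solved explicitly: with `D t = c x₀ + (b - c x₀) e^{-abt}` one computes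
`(x D - b x₀)' = -a c x (x D - b x₀)`, so the linear equation with zero initial value forces
`x D = b x₀`. For `x₀ > 0` the denominator `D` stays positive on `[0, ∞)` and tends to
`c x₀`, hence `x → b / c`.
-/

open Filter Topology Real

/-- The integrating factor `exp (-∫₀ᵗ k)` makes `Q` constant. -/
theorem eq_zero_of_hasDerivAt_eq_mul_self {k Q : ℝ → ℝ} (hk : Continuous k)
    (hQ : ∀ t, HasDerivAt Q (k t * Q t) t) (hQ0 : Q 0 = 0) (t : ℝ) : Q t = 0 := by
  set K : ℝ → ℝ := fun t => ∫ s in (0 : ℝ)..t, k s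
  have hK : ∀ t, HasDerivAt K (k t) t := fun t => (hk.integral_hasStrictDerivAt 0 t).hasDerivAt
  have hg : ∀ t, HasDerivAt (fun t => Q t * exp (-K t)) 0 t := fun t =>
    ((hQ t).mul (hK t).neg.exp).congr_deriv (by ring)
  have hconst := is_const_of_deriv_eq_zero (fun t => (hg t).differentiableAt)
    (fun t => (hg t).deriv) t 0
  simpa [hQ0, K, exp_ne_zero] using hconst

/-- The solution of `x' = a x (b - c x)`, `x 0 = x₀` is `b x₀ / logisticDenom a b c x₀ t`. -/
noncomputable def logisticDenom (a b c x₀ t : ℝ) : ℝ :=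
  c * x₀ + (b - c * x₀) * exp (-(a * b) * t)

section Logistic

variable {a b c x₀ : ℝ}

theorem logisticDenom_zero : logisticDenom a b c x₀ 0 = b := by
  simp [logisticDenom]

theorem hasDerivAt_logisticDenom (t : ℝ) :
    HasDerivAt (logisticDenom a b c x₀) (-(a * b) * (logisticDenom a b c x₀ t - c * x₀)) t :=
  (((hasDerivAt_id t).const_mul (-(a * b))).exp.const_mul _).const_add _ |>.congr_deriv
    (by simp only [logisticDenom, id]; ring)

theorem logisticDenom_pos (hab : 0 < a * b) (hb : 0 < b) (hcx₀ : 0 < c * x₀) {t : ℝ}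
    (ht : 0 ≤ t) : 0 < logisticDenom a b c x₀ t := by
  have he₁ : exp (-(a * b) * t) ≤ 1 := exp_le_one_iff.2 (by nlinarith)
  have he₀ : 0 < exp (-(a * b) * t) := exp_pos _
  have hsplit : logisticDenom a b c x₀ t =
      c * x₀ * (1 - exp (-(a * b) * t)) + b * exp (-(a * b) * t) := by
    simp only [logisticDenom]; ring
  rw [hsplit]
  nlinarith

theorem tendsto_logisticDenom (hab : 0 < a * b) :
    Tendsto (logisticDenom a b c x₀) atTop (𝓝 (c * x₀)) := by
  have hexp : Tendsto (fun t => exp (-(a * b) * t)) atTop (𝓝 0) :=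
    tendsto_exp_atBot.comp (tendsto_id.const_mul_atTop_of_neg (neg_neg_of_pos hab))
  change Tendsto (fun t => logisticDenom a b c x₀ t) atTop _
  simpa [logisticDenom, neg_mul] using (hexp.const_mul (b - c * x₀)).const_add (c * x₀)

variable {x : ℝ → ℝ}

theorem mul_logisticDenom_eq (hx : ∀ t, HasDerivAt x (a * x t * (b - c * x t)) t) (t : ℝ) :
    x t * logisticDenom a b c (x 0) t = b * x 0 := by
  set D := logisticDenom a b c (x 0)
  have hQ : ∀ t, HasDerivAt (fun t => x t * D t - b * x 0)
      (-(a * c * x t) * (x t * D t - b * x 0)) t := fun t =>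
    (((hx t).mul (hasDerivAt_logisticDenom t)).sub_const (b * x 0)).congr_deriv (by ring)
  have hk : Continuous fun t => -(a * c * x t) :=
    (continuous_const.mul (continuous_iff_continuousAt.2 fun t => (hx t).continuousAt)).neg
  refine sub_eq_zero.1 <| eq_zero_of_hasDerivAt_eq_mul_self hk hQ ?_ t
  simp only [D, logisticDenom_zero]
  ring

theorem tendsto_of_hasDerivAt_logistic (ha : 0 < a) (hb : 0 < b) (hc : 0 < c)
    (hx : ∀ t, HasDerivAt x (a * x t * (b - c * x t)) t) (hx0 : 0 < x 0) :
    Tendsto x atTop (𝓝 (b / c)) := by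
  have hab : 0 < a * b := mul_pos ha hb
  have hlim : Tendsto (fun t => b * x 0 / logisticDenom a b c (x 0) t) atTop (𝓝 (b / c)) := by
    rw [show b / c = b * x 0 / (c * x 0) by field_simp]
    exact tendsto_const_nhds.div (tendsto_logisticDenom hab) (by positivity)
  refine hlim.congr' <| (eventually_ge_atTop 0).mono fun t ht => ?_
  rw [div_eq_iff (logisticDenom_pos hab hb (mul_pos hc hx0) ht).ne', mul_logisticDenom_eq hx t]

end Logistic

/-- Restricted to the invariant line `y = x/2`, the nonlinear system reduces to
`dx/dt = λ₁x(μ + 1 − (2μ+3)x)`, whose positive equilibrium `x_c = (μ+1)/(2μ+3)`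
attracts every solution starting in `[1/3, 1/2]`. -/
theorem restricted_dynamics (lam mu : ℝ) (hlam : 0 < lam) (hmu : 0 < mu)
    (f : ℝ → ℝ → ℝ)
    (hf : ∀ x y, f x y = lam * (2 * mu * y - 4 * mu * x * y - 2 * x ^ 2 - 2 * x * y + x)) :
    (∀ x : ℝ, f x (x / 2) = lam * x * (mu + 1 - (2 * mu + 3) * x)) ∧
    (∀ x : ℝ → ℝ,
      (∀ t, HasDerivAt x (lam * x t * (mu + 1 - (2 * mu + 3) * x t)) t) →
      x 0 ∈ Set.Icc (1 / 3 : ℝ) (1 / 2) →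
      Tendsto x atTop (nhds ((mu + 1) / (2 * mu + 3)))) := by
  refine ⟨fun x => by rw [hf]; ring, fun x hx hx0 => ?_⟩
  exact tendsto_of_hasDerivAt_logistic hlam (by linarith) (by linarith) hx
    (by linarith [hx0.1])
end
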